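/- arXiv:0908.1698 — 2 statements merged into one kernel-verified Lean document; each statement's English description precedes it below -/
import Mathlib

section
/- Let d ≥ 1 and let P be an illuminated d-polytope with Γ(P) = 1. Then P has at least 2d vertices, and there is a perfect matching on the inner diagonals of P, i.e., there is a partition of the vertex set of P into pairs {u, v} such that each segment [u, v] is an inner diagonal of P. -/
/-!
Inner diagonals form a graph on the vertices without isolated vertices. If `x` is a vertex of
minimum degree and `w` a neighbour, deleting `x` and `w` isolates no vertex `z`: otherwise either
`x`, `z` are the two degree-2 vertices of a triangle through `w`, or `x`, `z` are leaves at `w`,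
and then `{x, z}` (resp. the set of all leaves at `w`) lies opposite `w`, contradicting `Γ(P) = 1`.
Induction gives a perfect matching. If it had fewer than `d` pairs, a nonzero linear functional
would be constant on each pair; maximised at a vertex, it would then be maximal along a whole
inner diagonal, hence at an interior point of `P`, which is impossible.
-/


open scoped RealInnerProductSpace

noncomputable section

/-- We work in `ℝ^d`, modelled as Euclidean space. -/
abbrev Euc (d : ℕ) := EuclideanSpace ℝ (Fin d)

/-- `P` is a polytope: the convex hull of a finite set of points. -/
def IsPolytope {d : ℕ} (P : Set (Euc d)) : Prop :=
  ∃ V : Set (Euc d), V.Finite ∧ P = convexHull ℝ V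

/-- `P` is a `d`-polytope in `ℝ^d`: a polytope whose affine span is all of `ℝ^d`. -/
def IsDPolytope {d : ℕ} (P : Set (Euc d)) : Prop :=
  IsPolytope P ∧ affineSpan ℝ P = ⊤

/-- The vertices of a polytope are its extreme points. -/
def verts {d : ℕ} (P : Set (Euc d)) : Set (Euc d) :=
  Set.extremePoints ℝ P

/-- `[u,v]` is an inner diagonal of `P`: `u`, `v` are distinct vertices and the
relative interior of the segment (the open segment) meets the interior of `P`. -/
def InnerDiagonal {d : ℕ} (P : Set (Euc d)) (u v : Euc d) : Prop :=
  u ∈ verts P ∧ v ∈ verts P ∧ u ≠ v ∧ (openSegment ℝ u v ∩ interior P).Nonempty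

/-- `P` is illuminated: every vertex lies on an inner diagonal. -/
def Illuminated {d : ℕ} (P : Set (Euc d)) : Prop :=
  ∀ v ∈ verts P, ∃ u, InnerDiagonal P u v

/-- A set `U` of vertices illuminates itself if every `v ∈ U` lies on an inner
diagonal `[u,v]` with `u ∈ U`. -/
def IlluminatesItself {d : ℕ} (P : Set (Euc d)) (U : Set (Euc d)) : Prop :=
  ∀ v ∈ U, ∃ u ∈ U, InnerDiagonal P u v

/-- A set `W` of vertices lies opposite the vertex `v ∉ W` if `[v,w]` is an inner
diagonal for all `w ∈ W`, and the remaining vertices illuminate themselves. -/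
def LiesOpposite {d : ℕ} (P : Set (Euc d)) (W : Set (Euc d)) (v : Euc d) : Prop :=
  v ∈ verts P ∧ W ⊆ verts P ∧ v ∉ W ∧ (∀ w ∈ W, InnerDiagonal P v w) ∧
    IlluminatesItself P (verts P \ (W ∪ {v}))

/-- `Γ(P)`: the maximum cardinality of a set lying opposite some vertex (`0` if none). -/
def Gamma {d : ℕ} (P : Set (Euc d)) : ℕ :=
  sSup {n : ℕ | ∃ W v, LiesOpposite P W v ∧ W.ncard = n}

/-- `p(d) = ⌈(√(4d+1) - 1)/2⌉`. -/
def pf (d : ℕ) : ℕ := ⌈(Real.sqrt (4 * d + 1) - 1) / 2⌉₊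

/-- `M(d) = min {2d, d + p(d) + ⌈d/p(d)⌉ + 1}`. -/
def Mf (d : ℕ) : ℕ := min (2 * d) (d + pf d + ⌈(d : ℝ) / (pf d : ℝ)⌉₊ + 1)

/-- A Mani `d`-polytope: an illuminated `d`-polytope with exactly `M(d)` vertices. -/
def IsManiPolytope {d : ℕ} (P : Set (Euc d)) : Prop :=
  IsDPolytope P ∧ Illuminated P ∧ (verts P).ncard = Mf d

/-- A facet of a `d`-polytope: an exposed face of dimension `d - 1`. -/
def IsFacetOf {d : ℕ} (P F : Set (Euc d)) : Prop :=
  IsExposed ℝ P F ∧ Module.finrank ℝ (affineSpan ℝ F).direction = d - 1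

/-- `S` is the vertex set of an (exposed) face of `P`. -/
def IsFaceVertexSet {d : ℕ} (P S : Set (Euc d)) : Prop :=
  ∃ F : Set (Euc d), IsExposed ℝ P F ∧ S = verts P ∩ F

/-- Combinatorial equivalence: a bijection of the vertex sets carrying vertex sets
of faces to vertex sets of faces in both directions. -/
def CombEquiv {d : ℕ} (P Q : Set (Euc d)) : Prop :=
  ∃ f : Euc d → Euc d, Set.BijOn f (verts P) (verts Q) ∧
    ∀ S ⊆ verts P, (IsFaceVertexSet P S ↔ IsFaceVertexSet Q (f '' S))

/-- The `d`-dimensional crosspolytope `conv {±e₁, …, ±e_d}`. -/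
def crossPolytope (d : ℕ) : Set (Euc d) :=
  convexHull ℝ
    {x | ∃ i : Fin d, x = EuclideanSpace.single i 1 ∨ x = -EuclideanSpace.single i 1}

/-- `{u, v}` is the vertex set of an edge (a `1`-dimensional exposed face) of `P`. -/
def IsEdgeVertexSet {d : ℕ} (P : Set (Euc d)) (u v : Euc d) : Prop :=
  ∃ F : Set (Euc d), IsExposed ℝ P F ∧
    Module.finrank ℝ (affineSpan ℝ F).direction = 1 ∧ Set.extremePoints ℝ F = {u, v}

namespace SimpleGraph

variable {α : Type*} (G : SimpleGraph α)

def NoIsolatedOn (U : Set α) : Prop :=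
  ∀ v ∈ U, ∃ u ∈ U, G.Adj u v

def IsOppositeIn (V W : Set α) (v : α) : Prop :=
  v ∈ V ∧ W ⊆ V ∧ v ∉ W ∧ (∀ w ∈ W, G.Adj v w) ∧ G.NoIsolatedOn (V \ (W ∪ {v}))

def IsPerfectMatchingOn (V : Set α) (M : Set (Set α)) : Prop :=
  ⋃₀ M = V ∧ M.PairwiseDisjoint id ∧ ∀ q ∈ M, ∃ u v, G.Adj u v ∧ q = {u, v}

variable {G}

open Set

theorem isOppositeIn_leaves {V : Set α} (hV : G.NoIsolatedOn V) {w : α} (hw : w ∈ V) :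
    G.IsOppositeIn V {y ∈ V | V ∩ G.neighborSet y ⊆ {w}} w := by
  have adj_of_leaf : ∀ y ∈ V, V ∩ G.neighborSet y ⊆ {w} → G.Adj w y := by
    intro y hy hleaf
    obtain ⟨u, hu, huy⟩ := hV y hy
    obtain rfl : u = w := hleaf ⟨hu, huy.symm⟩
    exact huy
  refine ⟨hw, fun y hy => hy.1, fun hleaf => G.irrefl (adj_of_leaf w hw hleaf.2),
    fun y hy => adj_of_leaf y hy.1 hy.2, ?_⟩
  rintro y ⟨hyV, hy⟩
  simp only [mem_union, mem_ofPred_eq, mem_singleton_iff, not_or, not_and] at hy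
  obtain ⟨u, ⟨huV, hyu⟩, huw⟩ := not_subset.1 (hy.1 hyV)
  refine ⟨u, ⟨huV, ?_⟩, hyu.symm⟩
  simp only [mem_union, mem_ofPred_eq, mem_singleton_iff, not_or, not_and]
  exact ⟨fun _ hleaf => hy.2 (hleaf ⟨hyV, hyu.symm⟩), huw⟩

theorem isOppositeIn_pair_of_triangle {V : Set α} {x z w : α}
    (hx : V ∩ G.neighborSet x = {w, z}) (hz : V ∩ G.neighborSet z = {x, w})
    (hdeg : ∀ y ∈ V, 2 ≤ (V ∩ G.neighborSet y).ncard) : G.IsOppositeIn V {x, z} w := by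
  have hxw : w ∈ V ∩ G.neighborSet x := hx ▸ mem_insert w {z}
  have hxz : z ∈ V ∩ G.neighborSet x := hx ▸ mem_insert_of_mem w rfl
  have hzx : x ∈ V ∩ G.neighborSet z := hz ▸ mem_insert x {w}
  have hzw : w ∈ V ∩ G.neighborSet z := hz ▸ mem_insert_of_mem x rfl
  refine ⟨hxw.1, insert_subset hzx.1 (singleton_subset_iff.2 hxz.1), ?_, ?_, ?_⟩
  · rintro (h | h)
    exacts [G.ne_of_adj hxw.2 h.symm, G.ne_of_adj hzw.2 h.symm]
  · rintro y (rfl | rfl)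
    exacts [hxw.2.symm, hzw.2.symm]
  rintro y ⟨hyV, hy⟩
  simp only [mem_union, mem_insert_iff, mem_singleton_iff, not_or] at hy
  obtain ⟨⟨hyx, hyz⟩, hyw⟩ := hy
  obtain ⟨u, ⟨huV, hyu⟩, huw⟩ := exists_ne_of_one_lt_ncard (hdeg y hyV) w
  refine ⟨u, ⟨huV, ?_⟩, hyu.symm⟩
  have hux : u ≠ x := by
    rintro rfl
    have : y ∈ ({w, z} : Set α) := hx ▸ ⟨hyV, hyu.symm⟩
    simp_all
  have huz : u ≠ z := by
    rintro rfl
    have : y ∈ ({x, w} : Set α) := hz ▸ ⟨hyV, hyu.symm⟩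
    simp_all
  simp [hux, huz, huw]

theorem NoIsolatedOn.diff_pair_of_isMin {V : Set α} (hfin : V.Finite) (hV : G.NoIsolatedOn V)
    (hopp : ∀ W v, G.IsOppositeIn V W v → W.ncard ≤ 1) {x w : α} (hxV : x ∈ V)
    (hmin : ∀ y ∈ V, (V ∩ G.neighborSet x).ncard ≤ (V ∩ G.neighborSet y).ncard)
    (hw : w ∈ V ∩ G.neighborSet x) : G.NoIsolatedOn (V \ {x, w}) := by
  rintro z ⟨hzV, hzxw⟩
  by_contra! hiso
  simp only [mem_insert_iff, mem_singleton_iff, not_or] at hzxw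
  obtain ⟨hzx, hzw⟩ := hzxw
  have hNz : V ∩ G.neighborSet z ⊆ {x, w} := fun u ⟨huV, hzu⟩ =>
    by_contra fun hu => hiso u ⟨huV, hu⟩ hzu.symm
  by_cases hxz : G.Adj x z
  · have hwz : {w, z} ⊆ V ∩ G.neighborSet x :=
      insert_subset hw (singleton_subset_iff.2 ⟨hzV, hxz⟩)
    have hx2 : 2 ≤ (V ∩ G.neighborSet x).ncard :=
      (ncard_pair (Ne.symm hzw)).ge.trans (ncard_le_ncard hwz (hfin.inter_of_left _))
    have hz2 : (V ∩ G.neighborSet z).ncard ≤ 2 :=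
      (ncard_le_ncard hNz).trans ((ncard_insert_le _ _).trans (by simp))
    have hNx : V ∩ G.neighborSet x = {w, z} :=
      (eq_of_subset_of_ncard_le hwz (by
        rw [ncard_pair (Ne.symm hzw)]; exact (hmin z hzV).trans hz2)
        (hfin.inter_of_left _)).symm
    have hNz' : V ∩ G.neighborSet z = {x, w} :=
      eq_of_subset_of_ncard_le hNz (by
        rw [ncard_pair (G.ne_of_adj hw.2)]; exact hx2.trans (hmin z hzV))
    have := hopp _ _ (isOppositeIn_pair_of_triangle hNx hNz' fun y hy => hx2.trans (hmin y hy))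
    rw [ncard_pair (Ne.symm hzx)] at this
    omega
  · have hz1 : V ∩ G.neighborSet z ⊆ {w} := fun u hu => by
      rcases hNz hu with rfl | h
      exacts [absurd hu.2.symm hxz, h]
    have hx1 : V ∩ G.neighborSet x ⊆ {w} := by
      have : (V ∩ G.neighborSet x).ncard ≤ 1 :=
        (hmin z hzV).trans ((ncard_le_ncard hz1).trans (ncard_singleton w).le)
      exact fun u hu => (ncard_le_one (hfin.inter_of_left _)).1 this u hu w hw
    have hleaves := hopp _ _ (isOppositeIn_leaves hV hw.1)
    have hxz : ({x, z} : Set α) ⊆ {y ∈ V | V ∩ G.neighborSet y ⊆ {w}} :=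
      insert_subset ⟨hxV, hx1⟩ (singleton_subset_iff.2 ⟨hzV, hz1⟩)
    have := (ncard_pair (Ne.symm hzx)).ge.trans (ncard_le_ncard hxz (hfin.sep _))
    omega

theorem IsOppositeIn.of_diff_pair {V W : Set α} {v x w : α}
    (h : G.IsOppositeIn (V \ {x, w}) W v) (hx : x ∈ V) (hw : w ∈ V) (hxw : G.Adj x w) :
    G.IsOppositeIn V W v := by
  obtain ⟨hv, hW, hvW, hadj, hiso⟩ := h
  refine ⟨hv.1, hW.trans sdiff_subset, hvW, hadj, ?_⟩
  have hout : ∀ u ∈ ({x, w} : Set α), u ∉ W ∪ {v} := by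
    rintro u hu (huW | rfl)
    exacts [(hW huW).2 hu, hv.2 hu]
  rintro y ⟨hyV, hy⟩
  by_cases hyxw : y ∈ ({x, w} : Set α)
  · rcases hyxw with rfl | rfl
    · exact ⟨w, ⟨hw, hout w (mem_insert_of_mem _ rfl)⟩, hxw.symm⟩
    · exact ⟨x, ⟨hx, hout x (mem_insert _ _)⟩, hxw⟩
  · obtain ⟨u, ⟨⟨huV, -⟩, hu⟩, huy⟩ := hiso y ⟨⟨hyV, hyxw⟩, hy⟩
    exact ⟨u, ⟨huV, hu⟩, huy⟩

theorem IsPerfectMatchingOn.finite {V : Set α} {M : Set (Set α)}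
    (hM : G.IsPerfectMatchingOn V M) (hV : V.Finite) : M.Finite :=
  hV.finite_subsets.subset fun _ hq => hM.1 ▸ subset_sUnion_of_mem hq

theorem IsPerfectMatchingOn.insert_pair {V : Set α} {M : Set (Set α)} {x w : α}
    (hM : G.IsPerfectMatchingOn (V \ {x, w}) M) (hx : x ∈ V) (hw : w ∈ V) (hxw : G.Adj x w) :
    G.IsPerfectMatchingOn V (insert {x, w} M) := by
  obtain ⟨hcover, hdisj, hedge⟩ := hM
  refine ⟨?_, hdisj.insert fun q hq _ => ?_, ?_⟩
  · rw [sUnion_insert, hcover, union_sdiff_cancel (insert_subset hx (singleton_subset_iff.2 hw))]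
  · exact disjoint_sdiff_right.mono_right (hcover ▸ subset_sUnion_of_mem hq)
  · rintro q (rfl | hq)
    exacts [⟨x, w, hxw, rfl⟩, hedge q hq]

theorem exists_isPerfectMatchingOn {V : Set α} (hfin : V.Finite) (hV : G.NoIsolatedOn V)
    (hopp : ∀ W v, G.IsOppositeIn V W v → W.ncard ≤ 1) :
    ∃ M, G.IsPerfectMatchingOn V M ∧ V.ncard = 2 * M.ncard := by
  induction hn : V.ncard using Nat.strong_induction_on generalizing V with
  | _ n ih =>
  obtain rfl | hne := V.eq_empty_or_nonempty
  · exact ⟨∅, ⟨sUnion_empty, pairwiseDisjoint_empty, by simp⟩, by simp [← hn]⟩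
  obtain ⟨x, hxV, hmin⟩ := exists_min_image V (fun y => (V ∩ G.neighborSet y).ncard) hfin hne
  obtain ⟨w, hwV, hwx⟩ := hV x hxV
  have hsub : {x, w} ⊆ V := insert_subset hxV (singleton_subset_iff.2 hwV)
  have hpair := ncard_pair (G.ne_of_adj hwx.symm)
  have h2n : 2 ≤ n := hn ▸ hpair ▸ ncard_le_ncard hsub hfin
  obtain ⟨M, hM, hMcard⟩ := ih (n - 2) (by omega) hfin.sdiff
    (hV.diff_pair_of_isMin hfin hopp hxV hmin ⟨hwV, hwx.symm⟩)
    (fun W v h => hopp W v (h.of_diff_pair hxV hwV hwx.symm))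
    (by rw [ncard_sdiff hsub, hpair, hn])
  have hnew : {x, w} ∉ M := fun h =>
    ((hM.1 ▸ subset_sUnion_of_mem h : {x, w} ⊆ V \ {x, w}) (mem_insert x _)).2 (mem_insert x _)
  refine ⟨_, hM.insert_pair hxV hwV hwx.symm, ?_⟩
  rw [ncard_insert_of_notMem hnew (hM.finite hfin.sdiff)]
  omega

end SimpleGraph

section Geometry

open Set Module Submodule

theorem IsCompact.exists_mem_extremePoints_isMaxOn {E : Type*} [AddCommGroup E] [Module ℝ E]
    [TopologicalSpace E] [T2Space E] [IsTopologicalAddGroup E] [ContinuousSMul ℝ E]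
    [LocallyConvexSpace ℝ E] {s : Set E} (hs : IsCompact s) (hne : s.Nonempty)
    (l : StrongDual ℝ E) : ∃ x ∈ s.extremePoints ℝ, IsMaxOn l s x := by
  obtain ⟨z, hz, hzmax⟩ := hs.exists_isMaxOn hne l.continuous.continuousOn
  have hexp : IsExposed ℝ s (l.toExposed s) := ContinuousLinearMap.toExposed.isExposed
  obtain ⟨x, hx⟩ := (hexp.isCompact hs).extremePoints_nonempty ⟨z, hz, fun y hy => hzmax hy⟩
  exact ⟨x, hexp.isExtreme.extremePoints_subset_extremePoints hx, fun y hy => hx.1.2 y hy⟩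

variable {E : Type*} [NormedAddCommGroup E] [NormedSpace ℝ E]

theorem ContinuousLinearMap.eq_zero_of_isMaxOn_of_mem_interior {s : Set E} {l : StrongDual ℝ E}
    {x : E} (hmax : IsMaxOn l s x) (hx : x ∈ interior s) : l = 0 :=
  (hmax.isLocalMax (mem_interior_iff_mem_nhds.1 hx)).hasFDerivAt_eq_zero l.hasFDerivAt

theorem finrank_le_ncard_of_diagonal_cover [FiniteDimensional ℝ E] {P : Set E}
    (hP : IsCompact P) (hne : P.Nonempty) {M : Set (Set E)} (hM : M.Finite)
    (hcover : P.extremePoints ℝ ⊆ ⋃₀ M)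
    (hdiag : ∀ q ∈ M, ∃ u v, (openSegment ℝ u v ∩ interior P).Nonempty ∧ q = {u, v}) :
    finrank ℝ E ≤ M.ncard := by
  by_contra! hlt
  choose! u v hdiag hq using hdiag
  have : Fintype M := hM.fintype
  have hspan : span ℝ (range fun q : M => u q - v q) < ⊤ := by
    refine lt_top_of_finrank_lt_finrank ((finrank_range_le_card _).trans_lt ?_)
    rwa [← Nat.card_eq_fintype_card, Nat.card_coe_set_eq]
  obtain ⟨f, hf0, hker⟩ := exists_le_ker_of_lt_top _ hspan
  set l := LinearMap.toContinuousLinearMap f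
  obtain ⟨x, hx, hxmax⟩ := hP.exists_mem_extremePoints_isMaxOn hne l
  obtain ⟨q, hqM, hxq⟩ := hcover hx
  obtain ⟨s, hs, hsint⟩ := hdiag q hqM
  have huv : l (u q) = l (v q) := by
    have := hker (subset_span ⟨⟨q, hqM⟩, rfl⟩)
    simpa [l, sub_eq_zero] using this
  have hlx : l x = l (u q) := by
    rw [hq q hqM] at hxq
    rcases hxq with rfl | rfl
    exacts [rfl, huv.symm]
  have hls : l s = l (u q) := by
    have : l s ∈ openSegment ℝ (l (u q)) (l (v q)) :=
      image_openSegment ℝ l.toLinearMap.toAffineMap (u q) (v q) ▸ mem_image_of_mem _ hs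
    rwa [← huv, openSegment_same] at this
  have hsmax : IsMaxOn l P s :=
    isMaxOn_iff.2 fun y hy => (isMaxOn_iff.1 hxmax y hy).trans (hlx.trans hls.symm).le
  exact hf0 (LinearMap.toContinuousLinearMap.map_eq_zero_iff.1
    (ContinuousLinearMap.eq_zero_of_isMaxOn_of_mem_interior hsmax hsint))

end Geometry

theorem IsPolytope.verts_finite {d : ℕ} {P : Set (Euc d)} (hP : IsPolytope P) :
    (verts P).Finite := by
  obtain ⟨V, hV, rfl⟩ := hP
  exact hV.subset extremePoints_convexHull_subset

theorem IsPolytope.isCompact {d : ℕ} {P : Set (Euc d)} (hP : IsPolytope P) : IsCompact P := by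
  obtain ⟨V, hV, rfl⟩ := hP
  exact hV.isCompact_convexHull ℝ

theorem IsDPolytope.nonempty {d : ℕ} {P : Set (Euc d)} (hP : IsDPolytope P) : P.Nonempty :=
  (affineSpan_nonempty ℝ).1 (by rw [hP.2]; exact ⟨0, trivial⟩)

def innerDiagonalGraph {d : ℕ} (P : Set (Euc d)) : SimpleGraph (Euc d) where
  Adj := InnerDiagonal P
  symm := ⟨fun _ _ h => ⟨h.2.1, h.1, h.2.2.1.symm, by rw [openSegment_symm]; exact h.2.2.2⟩⟩
  loopless := ⟨fun _ h => h.2.2.1 rfl⟩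

theorem ncard_le_gamma {d : ℕ} {P : Set (Euc d)} (hfin : (verts P).Finite) {W : Set (Euc d)}
    {v : Euc d} (h : LiesOpposite P W v) : W.ncard ≤ Gamma P :=
  le_csSup ⟨(verts P).ncard, by rintro _ ⟨W', v', h', rfl⟩; exact Set.ncard_le_ncard h'.2.1 hfin⟩
    ⟨W, v, h, rfl⟩

theorem illuminated_gammaOne_card_and_matching_general {d : ℕ}
    (P : Set (Euc d)) (hP : IsDPolytope P) (hIll : Illuminated P)
    (hGamma : Gamma P = 1) :
    2 * d ≤ (verts P).ncard ∧
      ∃ Pairing : Set (Set (Euc d)), ⋃₀ Pairing = verts P ∧ Pairing.PairwiseDisjoint id ∧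
        ∀ q ∈ Pairing, ∃ u v : Euc d, InnerDiagonal P u v ∧ q = {u, v} := by
  have hfin := hP.1.verts_finite
  obtain ⟨M, hM, hcard⟩ := (innerDiagonalGraph P).exists_isPerfectMatchingOn hfin
    (fun v hv => let ⟨u, hu⟩ := hIll v hv; ⟨u, hu.1, hu⟩)
    (fun W v h => hGamma ▸ ncard_le_gamma hfin h)
  have hdim := finrank_le_ncard_of_diagonal_cover hP.1.isCompact hP.nonempty (hM.finite hfin)
    hM.1.ge fun q hq => let ⟨u, v, h, hq⟩ := hM.2.2 q hq; ⟨u, v, h.2.2.2, hq⟩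
  rw [finrank_euclideanSpace_fin] at hdim
  exact ⟨by omega, M, hM⟩

/-- If `P` is an illuminated `d`-polytope (`d ≥ 1`) with `Γ(P) = 1`,
then `P` has at least `2d` vertices and there is a perfect matching on the inner
diagonals: a partition of the vertex set into pairs spanning inner diagonals. -/
theorem illuminated_gammaOne_card_and_matching {d : ℕ} (hd : 1 ≤ d)
    (P : Set (Euc d)) (hP : IsDPolytope P) (hIll : Illuminated P)
    (hGamma : Gamma P = 1) :
    2 * d ≤ (verts P).ncard ∧
      ∃ Pairing : Set (Set (Euc d)), ⋃₀ Pairing = verts P ∧ Pairing.PairwiseDisjoint id ∧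
        ∀ q ∈ Pairing, ∃ u v : Euc d, InnerDiagonal P u v ∧ q = {u, v} :=
  illuminated_gammaOne_card_and_matching_general P hP hIll hGamma
end
end

section
/- Let P = conv(V) be a d-polytope with finite vertex set V, let F be a facet of P with supporting inequality ⟨a,x⟩ ≤ b (so ⟨a,x⟩ ≤ b holds on P and F = P ∩ {x : ⟨a,x⟩ = b}), and let x₀ ∈ ℝ^d be a point beyond F and beneath all other facets, i.e., ⟨a,x₀⟩ > b while x₀ strictly satisfies the supporting inequality of every other facet of P. Then for every vertex v of P with v ∉ F, the segment [x₀, v] is an inner diagonal of the stacked polytope conv(V ∪ {x₀}). -/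
open scoped InnerProductSpace

noncomputable section

/-!
The key fact is that `x₀` lies strictly beneath every supporting hyperplane of `P` that touches `P`
outside `F`. For facet hyperplanes this is the hypothesis. Otherwise the face `G` cut out by the
hyperplane has codimension at least two, so the hyperplane can be tilted about `aff G` in either
direction until it picks up a further vertex; the original hyperplane is a nonnegative combination
of the two tilted ones, whose faces are strictly larger, and induction on the codimension of the
face applies. Consequently a functional exposing `v` in `P` still exposes it in `conv (V ∪ {x₀})`,
and no supporting hyperplane of `conv (V ∪ {x₀})` contains both `x₀` and `v`, so the open segment
between them lies in the interior.
-/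

open Module

theorem exists_slope_max {ι : Type*} {s : Set ι} (hs : s.Finite) {p q : ι → ℝ}
    (hp : ∀ i ∈ s, p i ≤ 0) (hq : ∀ i ∈ s, p i = 0 → q i = 0) (hneg : ∃ i ∈ s, p i < 0) :
    ∃ m : ℝ, (∀ i ∈ s, m * p i + q i ≤ 0) ∧ ∃ i ∈ s, p i < 0 ∧ m * p i + q i = 0 := by
  obtain ⟨i, ⟨his, hi⟩, hmax⟩ := Set.exists_max_image {i ∈ s | p i < 0} (fun i => q i / -p i)
    (hs.subset (Set.sep_subset _ _)) hneg
  refine ⟨q i / -p i, fun j hj => ?_, i, his, hi, by field_simp [hi.ne]; ring⟩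
  rcases (hp j hj).lt_or_eq with hj' | hj'
  · have := hmax j ⟨hj, hj'⟩
    rw [div_le_iff₀ (neg_pos.2 hj')] at this
    linarith
  · simp [hj', hq j hj hj']

section InnerProductSpace

variable {E : Type*} [NormedAddCommGroup E] [InnerProductSpace ℝ E]

theorem inner_le_of_mem_convexHull {S : Set E} {c x : E} {r : ℝ} (hS : ∀ w ∈ S, ⟪c, w⟫_ℝ ≤ r)
    (hx : x ∈ convexHull ℝ S) : ⟪c, x⟫_ℝ ≤ r :=
  convexHull_min hS (convex_halfSpace_le (innerₛₗ ℝ c).isLinear r) hx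

theorem inner_lt_of_mem_convexHull_of_ne {S : Set E} {c x y : E}
    (hS : ∀ w ∈ S, w ≠ x → ⟪c, w⟫_ℝ < ⟪c, x⟫_ℝ) (hy : y ∈ convexHull ℝ (insert x S))
    (hyx : y ≠ x) : ⟪c, y⟫_ℝ < ⟪c, x⟫_ℝ := by
  rw [← Set.insert_sdiff_singleton] at hy
  rcases (S \ {x}).eq_empty_or_nonempty with hT | hT
  · simp [hT] at hy
    exact absurd hy hyx
  rw [convexHull_insert hT, convexJoin_singleton_left] at hy
  obtain ⟨z, hz, a, b, ha, hb, hab, rfl⟩ := Set.mem_iUnion₂.1 hy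
  have hcz : ⟪c, z⟫_ℝ < ⟪c, x⟫_ℝ :=
    convexHull_min (fun w hw => hS w hw.1 hw.2) (convex_halfSpace_lt (innerₛₗ ℝ c).isLinear _) hz
  rcases hb.eq_or_lt with rfl | hb
  · simp [show a = 1 by linarith] at hyx
  rw [inner_add_right, real_inner_smul_right, real_inner_smul_right, ← sub_pos]
  calc 0 < b * (⟪c, x⟫_ℝ - ⟪c, z⟫_ℝ) := mul_pos hb (sub_pos.2 hcz)
    _ = _ := by rw [eq_sub_of_add_eq hab]; ring

theorem mem_extremePoints_convexHull_of_inner_lt {S : Set E} {c x : E} (hx : x ∈ S)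
    (hS : ∀ w ∈ S, w ≠ x → ⟪c, w⟫_ℝ < ⟪c, x⟫_ℝ) :
    x ∈ (convexHull ℝ S).extremePoints ℝ := by
  rw [(convex_convexHull ℝ S).mem_extremePoints_iff_convex_sdiff]
  refine ⟨subset_convexHull ℝ S hx, ?_⟩
  have : convexHull ℝ S \ {x} = convexHull ℝ S ∩ {y | ⟪c, y⟫_ℝ < ⟪c, x⟫_ℝ} := by
    ext y
    refine ⟨fun ⟨hy, hyx⟩ => ⟨hy, ?_⟩, fun ⟨hy, hlt⟩ => ⟨hy, fun h => ?_⟩⟩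
    · exact inner_lt_of_mem_convexHull_of_ne hS (by rwa [Set.insert_eq_of_mem hx]) hyx
    · simp [Set.mem_singleton_iff.1 h] at hlt
  rw [this]
  exact (convex_convexHull ℝ S).inter (convex_halfSpace_lt (innerₛₗ ℝ c).isLinear _)

theorem smul_add_ne_zero_of_inner_eq_zero {c u : E} (hcu : ⟪c, u⟫_ℝ = 0) (hu : u ≠ 0) (m : ℝ) :
    m • c + u ≠ 0 := fun h => hu <| by
  have := congrArg (⟪u, ·⟫_ℝ) h
  simpa [inner_add_right, real_inner_smul_right, real_inner_comm c u, hcu] using this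

theorem vectorSpan_le_orthogonal_of_inner_eq {s : Set E} {c : E} {β : ℝ}
    (hs : ∀ x ∈ s, ⟪c, x⟫_ℝ = β) : vectorSpan ℝ s ≤ (ℝ ∙ c)ᗮ := by
  rw [vectorSpan_def, Submodule.span_le]
  rintro _ ⟨x, hx, y, hy, rfl⟩
  simp [Submodule.mem_orthogonal_singleton_iff_inner_right, inner_sub_right, hs x hx, hs y hy]

theorem orthogonal_span_singleton_ne_top {c : E} (hc : c ≠ 0) : (ℝ ∙ c)ᗮ ≠ ⊤ := fun h =>
  hc <| inner_self_eq_zero.1 <|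
    Submodule.mem_orthogonal_singleton_iff_inner_right.1 (h ▸ Submodule.mem_top)

theorem exists_inner_ne_of_affineSpan_eq_top {s : Set E} (hs : affineSpan ℝ s = ⊤) {c : E}
    (hc : c ≠ 0) (β : ℝ) : ∃ x ∈ s, ⟪c, x⟫_ℝ ≠ β := by
  by_contra! h
  refine orthogonal_span_singleton_ne_top hc (top_le_iff.1 ?_)
  rw [← AffineSubspace.vectorSpan_eq_top_of_affineSpan_eq_top ℝ E E hs]
  exact vectorSpan_le_orthogonal_of_inner_eq h

theorem exists_mem_ne_of_affineSpan_eq_top [Nontrivial E] {s : Set E} (hs : affineSpan ℝ s = ⊤)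
    (v : E) : ∃ w ∈ s, w ≠ v := by
  obtain ⟨c, hc⟩ := exists_ne (0 : E)
  obtain ⟨w, hws, hw⟩ := exists_inner_ne_of_affineSpan_eq_top hs hc ⟪c, v⟫_ℝ
  exact ⟨w, hws, ne_of_apply_ne _ hw⟩

theorem isExposed_setOf_inner_eq {P : Set E} {c g : E} (hsupp : ∀ x ∈ P, ⟪c, x⟫_ℝ ≤ ⟪c, g⟫_ℝ)
    (hg : g ∈ P) : IsExposed ℝ P {x ∈ P | ⟪c, x⟫_ℝ = ⟪c, g⟫_ℝ} := by
  refine fun _ => ⟨innerSL ℝ c, Set.ext fun x => ?_⟩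
  simp only [innerSL_apply_apply, Set.mem_ofPred_eq]
  exact ⟨fun ⟨hx, hxg⟩ => ⟨hx, fun y hy => hxg ▸ hsupp y hy⟩,
    fun ⟨hx, hmax⟩ => ⟨hx, (hsupp x hx).antisymm (hmax g hg)⟩⟩

section CompleteSpace

variable [CompleteSpace E]

theorem exists_inner_lt_of_mem_extremePoints_convexHull {V : Set E} (hV : V.Finite) {v : E}
    (hv : v ∈ (convexHull ℝ V).extremePoints ℝ) :
    ∃ c : E, ∀ w ∈ V, w ≠ v → ⟪c, w⟫_ℝ < ⟪c, v⟫_ℝ := by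
  have hv' : v ∉ convexHull ℝ (V \ {v}) := fun h =>
    ((convex_convexHull ℝ V).mem_extremePoints_iff_mem_sdiff_convexHull_sdiff.1 hv).2
      (convexHull_mono (Set.sdiff_subset_sdiff_left (subset_convexHull ℝ V)) h)
  obtain ⟨f, r, hf, hr⟩ := geometric_hahn_banach_closed_point (convex_convexHull ℝ _)
    (hV.sdiff.isCompact_convexHull ℝ).isClosed hv'
  refine ⟨(InnerProductSpace.toDual ℝ E).symm f, fun w hw hwv => ?_⟩
  simp only [InnerProductSpace.toDual_symm_apply]
  exact (hf w (subset_convexHull ℝ _ ⟨hw, hwv⟩)).trans hr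

theorem mem_extremePoints_convexHull_union_singleton {V : Set E} (hV : V.Finite) {v x₀ : E}
    (hv : v ∈ (convexHull ℝ V).extremePoints ℝ) (hVv : ∃ w ∈ V, w ≠ v)
    (hbelow : ∀ c : E, c ≠ 0 → (∀ x ∈ convexHull ℝ V, ⟪c, x⟫_ℝ ≤ ⟪c, v⟫_ℝ) →
      ⟪c, x₀⟫_ℝ < ⟪c, v⟫_ℝ) :
    v ∈ (convexHull ℝ (V ∪ {x₀})).extremePoints ℝ := by
  obtain ⟨c, hc⟩ := exists_inner_lt_of_mem_extremePoints_convexHull hV hv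
  obtain ⟨w, hwV, hwv⟩ := hVv
  have hc0 : c ≠ 0 := by
    rintro rfl
    simpa using hc w hwV hwv
  have hcx₀ := hbelow c hc0 fun x hx => inner_le_of_mem_convexHull (fun w hw => by
    rcases eq_or_ne w v with rfl | hwv
    exacts [le_rfl, (hc w hw hwv).le]) hx
  refine mem_extremePoints_convexHull_of_inner_lt (c := c)
    (Or.inl (extremePoints_convexHull_subset hv)) ?_
  rintro w (hw | rfl) hwv
  exacts [hc w hw hwv, hcx₀]

theorem exists_inner_le_of_notMem_interior {A : Set E} (hA : Convex ℝ A)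
    (hAint : (interior A).Nonempty) {y : E} (hy : y ∉ interior A) :
    ∃ c : E, c ≠ 0 ∧ ∀ x ∈ A, ⟪c, x⟫_ℝ ≤ ⟪c, y⟫_ℝ := by
  obtain ⟨f, hf, hmax⟩ := geometric_hahn_banach_of_nonempty_interior_point hA hy hAint
  refine ⟨(InnerProductSpace.toDual ℝ E).symm f, by simpa using hf, fun x hx => ?_⟩
  simpa only [InnerProductSpace.toDual_symm_apply] using hmax x hx

theorem openSegment_subset_interior_of_forall_inner_lt {A : Set E} (hA : Convex ℝ A)
    (hAint : (interior A).Nonempty) {x v : E} (hx : x ∈ A) (hv : v ∈ A)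
    (hbelow : ∀ c : E, c ≠ 0 → (∀ z ∈ A, ⟪c, z⟫_ℝ ≤ ⟪c, v⟫_ℝ) → ⟪c, x⟫_ℝ < ⟪c, v⟫_ℝ) :
    openSegment ℝ x v ⊆ interior A := by
  rintro _ ⟨a, b, ha, hb, hab, rfl⟩
  by_contra hy
  obtain ⟨c, hc, hmax⟩ := exists_inner_le_of_notMem_interior hA hAint hy
  have hcx := hmax x hx
  have hcv := hmax v hv
  obtain rfl : a = 1 - b := by linarith
  rw [inner_add_right, real_inner_smul_right, real_inner_smul_right] at hcx hcv hmax
  have hxv : ⟪c, x⟫_ℝ ≤ ⟪c, v⟫_ℝ := le_of_mul_le_mul_left (by linarith) hb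
  have hlt := hbelow c hc fun z hz => (hmax z hz).trans (by nlinarith)
  nlinarith [mul_pos ha (sub_pos.2 hlt)]

end CompleteSpace

section FiniteDimensional

variable [FiniteDimensional ℝ E]

theorem finrank_vectorSpan_setOf_inner_eq_lt (P : Set E) {c : E} (hc : c ≠ 0) (β : ℝ) :
    finrank ℝ (vectorSpan ℝ {x ∈ P | ⟪c, x⟫_ℝ = β}) < finrank ℝ E :=
  (Submodule.finrank_mono (vectorSpan_le_orthogonal_of_inner_eq fun _ hx => hx.2)).trans_lt
    (Submodule.finrank_lt (orthogonal_span_singleton_ne_top hc))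

theorem exists_ne_zero_orthogonal (c : E) (K : Submodule ℝ E)
    (hK : finrank ℝ K + 1 < finrank ℝ E) :
    ∃ u : E, u ≠ 0 ∧ ⟪c, u⟫_ℝ = 0 ∧ ∀ z ∈ K, ⟪u, z⟫_ℝ = 0 := by
  have hne : (ℝ ∙ c) ⊔ K ≠ ⊤ := fun htop => by
    have h1 := Submodule.finrank_add_le_finrank_add_finrank (ℝ ∙ c) K
    have h2 : finrank ℝ (ℝ ∙ c) ≤ 1 := (finrank_span_le_card ({c} : Set E)).trans (by simp)
    rw [htop, finrank_top] at h1
    omega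
  obtain ⟨u, hu, hu0⟩ := Submodule.exists_mem_ne_zero_of_ne_bot
    (mt Submodule.orthogonal_eq_bot_iff.1 hne)
  exact ⟨u, hu0, Submodule.inner_right_of_mem_orthogonal (Submodule.mem_sup_left
    (Submodule.mem_span_singleton_self c)) hu, fun z hz =>
    Submodule.inner_left_of_mem_orthogonal (Submodule.mem_sup_right hz) hu⟩

theorem finrank_vectorSpan_lt_of_mem_of_notMem_affineSpan {s t : Set E} (hst : s ⊆ t)
    (hs : s.Nonempty) {w : E} (hwt : w ∈ t) (hws : w ∉ affineSpan ℝ s) :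
    finrank ℝ (vectorSpan ℝ s) < finrank ℝ (vectorSpan ℝ t) := by
  rw [← direction_affineSpan, ← direction_affineSpan]
  refine Submodule.finrank_lt_finrank_of_lt (AffineSubspace.direction_lt_of_nonempty ?_
    ((affineSpan_nonempty (k := ℝ)).2 hs))
  exact lt_of_le_of_ne (affineSpan_mono ℝ hst) fun h => hws (h ▸ subset_affineSpan ℝ t hwt)

theorem exists_tilt_supporting {V : Set E} (hV : V.Finite) {c u g : E}
    (hg : g ∈ convexHull ℝ V) (hsupp : ∀ w ∈ V, ⟪c, w⟫_ℝ ≤ ⟪c, g⟫_ℝ)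
    (hW : ∃ w ∈ V, ⟪c, w⟫_ℝ < ⟪c, g⟫_ℝ)
    (hu : ∀ z ∈ vectorSpan ℝ {x ∈ convexHull ℝ V | ⟪c, x⟫_ℝ = ⟪c, g⟫_ℝ}, ⟪u, z⟫_ℝ = 0) :
    ∃ m : ℝ, (∀ x ∈ convexHull ℝ V, ⟪m • c + u, x⟫_ℝ ≤ ⟪m • c + u, g⟫_ℝ) ∧
      finrank ℝ (vectorSpan ℝ {x ∈ convexHull ℝ V | ⟪c, x⟫_ℝ = ⟪c, g⟫_ℝ}) <
        finrank ℝ (vectorSpan ℝ {x ∈ convexHull ℝ V | ⟪m • c + u, x⟫_ℝ = ⟪m • c + u, g⟫_ℝ}) := by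
  set G := {x ∈ convexHull ℝ V | ⟪c, x⟫_ℝ = ⟪c, g⟫_ℝ}
  have hgG : g ∈ G := ⟨hg, rfl⟩
  have huG : ∀ x ∈ G, ⟪u, x⟫_ℝ = ⟪u, g⟫_ℝ := fun x hx => by
    have := hu _ (vsub_mem_vectorSpan ℝ hx hgG)
    rw [vsub_eq_sub, inner_sub_right] at this
    linarith
  have htilt : ∀ (m : ℝ) (x : E), ⟪m • c + u, x⟫_ℝ - ⟪m • c + u, g⟫_ℝ =
      m * (⟪c, x⟫_ℝ - ⟪c, g⟫_ℝ) + (⟪u, x⟫_ℝ - ⟪u, g⟫_ℝ) := fun m x => by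
    rw [inner_add_left, inner_add_left, real_inner_smul_left, real_inner_smul_left]; ring
  obtain ⟨m, hle, w, hwV, hwlt, hweq⟩ := exists_slope_max hV
    (p := fun w => ⟪c, w⟫_ℝ - ⟪c, g⟫_ℝ) (q := fun w => ⟪u, w⟫_ℝ - ⟪u, g⟫_ℝ)
    (fun w hw => sub_nonpos.2 (hsupp w hw))
    (fun w hw h => sub_eq_zero.2 (huG w ⟨subset_convexHull ℝ V hw, sub_eq_zero.1 h⟩))
    (by obtain ⟨w, hw, h⟩ := hW; exact ⟨w, hw, sub_neg.2 h⟩)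
  refine ⟨m, fun x hx => inner_le_of_mem_convexHull (fun w hw => ?_) hx, ?_⟩
  · linarith [htilt m w, hle w hw]
  refine finrank_vectorSpan_lt_of_mem_of_notMem_affineSpan (w := w)
    (fun x hx => ⟨hx.1, ?_⟩) ⟨g, hgG⟩ ⟨subset_convexHull ℝ V hwV, ?_⟩ fun hw => ?_
  · rw [← sub_eq_zero, htilt, hx.2, huG x hx]; ring
  · linarith [htilt m w]
  -- `aff G` lies in the hyperplane `⟪c, ·⟫ = ⟪c, g⟫`, which `w` misses
  have hwg := (AffineSubspace.vsub_right_mem_direction_iff_mem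
    (subset_affineSpan ℝ G hgG) w).2 hw
  rw [direction_affineSpan] at hwg
  have := Submodule.mem_orthogonal_singleton_iff_inner_right.1
    (vectorSpan_le_orthogonal_of_inner_eq (fun x hx => hx.2) hwg)
  rw [vsub_eq_sub, inner_sub_right] at this
  linarith

end FiniteDimensional

end InnerProductSpace

theorem isFacetOf_setOf_inner_eq {d : ℕ} {P : Set (Euc d)} {c g : Euc d} (hc : c ≠ 0)
    (hg : g ∈ P) (hsupp : ∀ x ∈ P, ⟪c, x⟫_ℝ ≤ ⟪c, g⟫_ℝ)
    (hdim : d - 1 ≤ finrank ℝ (vectorSpan ℝ {x ∈ P | ⟪c, x⟫_ℝ = ⟪c, g⟫_ℝ})) :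
    IsFacetOf P {x ∈ P | ⟪c, x⟫_ℝ = ⟪c, g⟫_ℝ} := by
  refine ⟨isExposed_setOf_inner_eq hsupp hg, ?_⟩
  have := finrank_vectorSpan_setOf_inner_eq_lt P hc ⟪c, g⟫_ℝ
  rw [finrank_euclideanSpace_fin] at this
  rw [direction_affineSpan]
  omega

theorem inner_lt_of_supporting_of_notMem_facet {d : ℕ} {V F : Set (Euc d)} {x₀ : Euc d}
    (hV : V.Finite) (hfull : affineSpan ℝ (convexHull ℝ V) = ⊤)
    (hbeneath : ∀ (F' : Set (Euc d)) (a' : Euc d) (b' : ℝ),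
      IsFacetOf (convexHull ℝ V) F' → F' ≠ F → (∀ x ∈ convexHull ℝ V, ⟪a', x⟫_ℝ ≤ b') →
      F' = {x ∈ convexHull ℝ V | ⟪a', x⟫_ℝ = b'} → ⟪a', x₀⟫_ℝ < b')
    {c g : Euc d} (hc : c ≠ 0) (hg : g ∈ convexHull ℝ V) (hgF : g ∉ F)
    (hsupp : ∀ x ∈ convexHull ℝ V, ⟪c, x⟫_ℝ ≤ ⟪c, g⟫_ℝ) : ⟪c, x₀⟫_ℝ < ⟪c, g⟫_ℝ := by
  by_cases hdim : d - 1 ≤ finrank ℝ (vectorSpan ℝ {x ∈ convexHull ℝ V | ⟪c, x⟫_ℝ = ⟪c, g⟫_ℝ})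
  · exact hbeneath _ c _ (isFacetOf_setOf_inner_eq hc hg hsupp hdim)
      (fun h => hgF (h ▸ ⟨hg, rfl⟩)) hsupp rfl
  rw [not_le] at hdim
  have hsuppV : ∀ w ∈ V, ⟪c, w⟫_ℝ ≤ ⟪c, g⟫_ℝ := fun w hw => hsupp w (subset_convexHull ℝ V hw)
  obtain ⟨w, hwV, hw⟩ := exists_inner_ne_of_affineSpan_eq_top
    (by rwa [affineSpan_convexHull] at hfull) hc ⟪c, g⟫_ℝ
  have hwlt : ⟪c, w⟫_ℝ < ⟪c, g⟫_ℝ := (hsuppV w hwV).lt_of_ne hw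
  obtain ⟨u, hu0, hcu, hu⟩ := exists_ne_zero_orthogonal c
    (vectorSpan ℝ {x ∈ convexHull ℝ V | ⟪c, x⟫_ℝ = ⟪c, g⟫_ℝ})
    (by rw [finrank_euclideanSpace_fin]; omega)
  obtain ⟨m₁, hsupp₁, hdim₁⟩ := exists_tilt_supporting hV hg hsuppV ⟨w, hwV, hwlt⟩ hu
  obtain ⟨m₂, hsupp₂, hdim₂⟩ := exists_tilt_supporting hV hg hsuppV ⟨w, hwV, hwlt⟩ (u := -u)
    fun z hz => by rw [inner_neg_left, hu z hz, neg_zero]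
  have h₁ := inner_lt_of_supporting_of_notMem_facet hV hfull hbeneath
    (smul_add_ne_zero_of_inner_eq_zero hcu hu0 m₁) hg hgF hsupp₁
  have h₂ := inner_lt_of_supporting_of_notMem_facet hV hfull hbeneath
    (smul_add_ne_zero_of_inner_eq_zero (by rw [inner_neg_right, hcu, neg_zero])
      (neg_ne_zero.2 hu0) m₂) hg hgF hsupp₂
  have hw₁ := hsupp₁ w (subset_convexHull ℝ V hwV)
  have hw₂ := hsupp₂ w (subset_convexHull ℝ V hwV)
  simp only [inner_add_left, inner_neg_left, real_inner_smul_left] at h₁ h₂ hw₁ hw₂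
  -- the two tilted functionals add up to `(m₁ + m₂) • c`, and `w` forces `m₁ + m₂ ≥ 0`
  have hm : 0 ≤ m₁ + m₂ := by
    by_contra! h
    nlinarith [mul_pos (neg_pos.2 h) (sub_pos.2 hwlt)]
  by_contra! h
  nlinarith [mul_nonneg hm (sub_nonneg.2 h)]
termination_by d - finrank ℝ (vectorSpan ℝ {x ∈ convexHull ℝ V | ⟪c, x⟫_ℝ = ⟪c, g⟫_ℝ})
decreasing_by all_goals omega

theorem stacking_innerDiagonal_general {d : ℕ} (V : Set (Euc d)) (hVfin : V.Finite)
    (P : Set (Euc d)) (hPV : P = convexHull ℝ V) (hfull : affineSpan ℝ P = ⊤)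
    (F : Set (Euc d))
    (a : Euc d) (b : ℝ)
    (hsupp : ∀ x ∈ P, ⟪a, x⟫_ℝ ≤ b)
    (hFeq : F = {x ∈ P | ⟪a, x⟫_ℝ = b})
    (x₀ : Euc d) (hbeyond : b < ⟪a, x₀⟫_ℝ)
    (hbeneath : ∀ (F' : Set (Euc d)) (a' : Euc d) (b' : ℝ),
      IsFacetOf P F' → F' ≠ F → (∀ x ∈ P, ⟪a', x⟫_ℝ ≤ b') →
      F' = {x ∈ P | ⟪a', x⟫_ℝ = b'} → ⟪a', x₀⟫_ℝ < b') :
    ∀ v ∈ verts P, v ∉ F →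
      InnerDiagonal (convexHull ℝ (V ∪ {x₀})) x₀ v := by
  subst hPV
  intro v hv hvF
  have hav : ⟪a, v⟫_ℝ < b := (hsupp v hv.1).lt_of_ne fun h => hvF (hFeq ▸ ⟨hv.1, h⟩)
  have hx₀v : x₀ ≠ v := fun h => (h ▸ hav).not_gt hbeyond
  have hbelow : ∀ c : Euc d, c ≠ 0 → (∀ x ∈ convexHull ℝ V, ⟪c, x⟫_ℝ ≤ ⟪c, v⟫_ℝ) →
      ⟪c, x₀⟫_ℝ < ⟪c, v⟫_ℝ := fun c hc =>
    inner_lt_of_supporting_of_notMem_facet hVfin hfull hbeneath hc hv.1 hvF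
  have hx₀ : x₀ ∈ (convexHull ℝ (V ∪ {x₀})).extremePoints ℝ := by
    refine mem_extremePoints_convexHull_of_inner_lt (c := a) (Or.inr rfl) ?_
    rintro w (hw | rfl) hwx₀
    exacts [(hsupp w (subset_convexHull ℝ V hw)).trans_lt hbeyond, absurd rfl hwx₀]
  have : Nontrivial (Euc d) := nontrivial_of_ne x₀ v hx₀v
  have hv' := mem_extremePoints_convexHull_union_singleton hVfin hv
    (exists_mem_ne_of_affineSpan_eq_top (by rwa [affineSpan_convexHull] at hfull) v) hbelow
  have hint : (interior (convexHull ℝ (V ∪ {x₀}))).Nonempty :=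
    ((convex_convexHull ℝ V).interior_nonempty_iff_affineSpan_eq_top.2 hfull).mono
      (interior_mono (convexHull_mono Set.subset_union_left))
  refine ⟨hx₀, hv', hx₀v, midpoint ℝ x₀ v,
    midpoint_mem_openSegment x₀ v, ?_⟩
  exact openSegment_subset_interior_of_forall_inner_lt (convex_convexHull ℝ _) hint hx₀.1 hv'.1
    (fun c hc hcQ => hbelow c hc fun x hx => hcQ x (convexHull_mono Set.subset_union_left hx))
    (midpoint_mem_openSegment x₀ v)

/-- Let `P = conv V` be a `d`-polytope with vertex set `V`, let
`F` be a facet of `P` with supporting inequality `⟨a,x⟩ ≤ b`, and let `x₀` be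
beyond `F` and beneath all other facets. Then for every vertex `v ∉ F` of `P`, the
segment `[x₀, v]` is an inner diagonal of the stacked polytope `conv (V ∪ {x₀})`. -/
theorem stacking_innerDiagonal {d : ℕ} (V : Set (Euc d)) (hVfin : V.Finite)
    (P : Set (Euc d)) (hPV : P = convexHull ℝ V) (hfull : affineSpan ℝ P = ⊤)
    (hVvert : V = verts P)
    (F : Set (Euc d)) (hF : IsFacetOf P F)
    (a : Euc d) (b : ℝ)
    (hsupp : ∀ x ∈ P, ⟪a, x⟫_ℝ ≤ b)
    (hFeq : F = {x ∈ P | ⟪a, x⟫_ℝ = b})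
    (x₀ : Euc d) (hbeyond : b < ⟪a, x₀⟫_ℝ)
    (hbeneath : ∀ (F' : Set (Euc d)) (a' : Euc d) (b' : ℝ),
      IsFacetOf P F' → F' ≠ F → (∀ x ∈ P, ⟪a', x⟫_ℝ ≤ b') →
      F' = {x ∈ P | ⟪a', x⟫_ℝ = b'} → ⟪a', x₀⟫_ℝ < b') :
    ∀ v ∈ verts P, v ∉ F →
      InnerDiagonal (convexHull ℝ (V ∪ {x₀})) x₀ v :=
  stacking_innerDiagonal_general V hVfin P hPV hfull F a b hsupp hFeq x₀ hbeyond hbeneath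
end
end
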